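/- If a quaternion tensor A is right invertible along B, C, then the right inverse along B, C is unique: if Z1 and Z2 both satisfy Z*A*B = B, C*A*Z = C, and Z = B*X = Y*C for some X, Y, then Z1 = Z2. -/
import Mathlib


open scoped Quaternion BigOperators

noncomputable section

/-- A quaternion third-order tensor in `H^{n1 x n2 x n3}`, with the third
(circulant) index taken mod `n3`. -/
abbrev QT (n1 n2 n3 : ℕ) := Fin n1 → Fin n2 → ZMod n3 → ℍ[ℝ]

/-- The T-product of two quaternion tensors (circular convolution along the third mode). -/
def tmul {n1 n2 l n3 : ℕ} [NeZero n3] (A : QT n1 n2 n3) (B : QT n2 l n3) : QT n1 l n3 :=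
  fun i j k => ∑ p : Fin n2, ∑ m : ZMod n3, A i p m * B p j (k - m)

/-- The identity tensor: first frontal slice is the identity matrix, others zero. -/
def tid (n n3 : ℕ) : QT n n n3 := fun i j k => if i = j ∧ k = 0 then 1 else 0

/-- Conjugate transpose: conjugate-transpose each frontal slice and
reverse the order of slices 2 through n3. -/
def hconj {n1 n2 n3 : ℕ} (A : QT n1 n2 n3) : QT n2 n1 n3 :=
  fun j i k => star (A i j (-k))

lemma tmul_assoc {a b c d n3 : ℕ} [NeZero n3] (A : QT a b n3) (B : QT b c n3) (C : QT c d n3) :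
    tmul (tmul A B) C = tmul A (tmul B C) := by
  funext i j k
  simp only [tmul, Finset.sum_mul, Finset.mul_sum, mul_assoc]
  calc
    ∑ p : Fin c, ∑ m : ZMod n3, ∑ q : Fin b, ∑ r : ZMod n3,
        A i q r * (B q p (m - r) * C p j (k - m))
      = ∑ p : Fin c, ∑ q : Fin b, ∑ m : ZMod n3, ∑ r : ZMod n3,
        A i q r * (B q p (m - r) * C p j (k - m)) :=
        Finset.sum_congr rfl fun p _ => Finset.sum_comm
    _ = ∑ q : Fin b, ∑ p : Fin c, ∑ m : ZMod n3, ∑ r : ZMod n3,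
        A i q r * (B q p (m - r) * C p j (k - m)) := Finset.sum_comm
    _ = ∑ q : Fin b, ∑ p : Fin c, ∑ r : ZMod n3, ∑ m : ZMod n3,
        A i q r * (B q p (m - r) * C p j (k - m)) :=
        Finset.sum_congr rfl fun q _ => Finset.sum_congr rfl fun p _ => Finset.sum_comm
    _ = ∑ q : Fin b, ∑ r : ZMod n3, ∑ p : Fin c, ∑ m : ZMod n3,
        A i q r * (B q p (m - r) * C p j (k - m)) :=
        Finset.sum_congr rfl fun q _ => Finset.sum_comm
    _ = ∑ q : Fin b, ∑ r : ZMod n3, ∑ p : Fin c, ∑ m : ZMod n3,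
        A i q r * (B q p m * C p j (k - r - m)) := by
        refine Finset.sum_congr rfl fun q _ => Finset.sum_congr rfl fun r _ =>
          Finset.sum_congr rfl fun p _ => ?_
        refine Fintype.sum_equiv (Equiv.subRight r) _ _ fun m => ?_
        simp only [Equiv.subRight_apply]
        congr 2
        ring_nf

theorem right_inverse_along_unique {n1 n2 l k n3 : ℕ} [NeZero n3]
    (A : QT n1 n2 n3) (B : QT n2 l n3) (C : QT k n1 n3)
    (Z1 Z2 : QT n2 n1 n3)
    (h1 : tmul (tmul Z1 A) B = B) (h1' : tmul (tmul C A) Z1 = C)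
    (hX1 : ∃ X : QT l n1 n3, Z1 = tmul B X) (hY1 : ∃ Y : QT n2 k n3, Z1 = tmul Y C)
    (h2 : tmul (tmul Z2 A) B = B) (h2' : tmul (tmul C A) Z2 = C)
    (hX2 : ∃ X : QT l n1 n3, Z2 = tmul B X) (hY2 : ∃ Y : QT n2 k n3, Z2 = tmul Y C) :
    Z1 = Z2 := by
  obtain ⟨Y1, hY1⟩ := hY1
  obtain ⟨X2, hX2⟩ := hX2
  calc
    Z1 = tmul Y1 C := hY1
    _ = tmul Y1 (tmul (tmul C A) Z2) := by rw [h2']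
    _ = tmul (tmul (tmul Y1 C) A) Z2 := by rw [← tmul_assoc Y1 (tmul C A) Z2, ← tmul_assoc Y1 C A]
    _ = tmul (tmul Z1 A) Z2 := by rw [← hY1]
    _ = tmul (tmul Z1 A) (tmul B X2) := by rw [← hX2]
    _ = tmul (tmul (tmul Z1 A) B) X2 := (tmul_assoc _ _ _).symm
    _ = tmul B X2 := by rw [h1]
    _ = Z2 := hX2.symm
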